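/- arXiv:1303.0053 — 6 statements merged into one kernel-verified Lean document; each statement's English description precedes it below -/
import Mathlib

section
/- The fixing operator F(i,j,·,A) on a family A of permutations of [n] is injective, hence the resulting family F(i,j,A) = {F(i,j,p,A) : p ∈ A} has the same cardinality as A. -/
open Finset Equiv

/-- The fixing operation `F(i,j,p)`. -/
def fixOp {n : ℕ} (i j : Fin n) (p : Equiv.Perm (Fin n)) : Equiv.Perm (Fin n) :=
  if p i = j then (Equiv.swap i j) * p else p

open scoped Classical in
theorem familyFix_injOn_and_card {n : ℕ} (i j : Fin n) (hij : i ≠ j)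
    (A : Finset (Equiv.Perm (Fin n))) :
    Set.InjOn (fun p => if fixOp i j p ∈ A then p else fixOp i j p) ↑A ∧
      (A.image (fun p => if fixOp i j p ∈ A then p else fixOp i j p)).card = A.card := by
  have hinj : Set.InjOn (fun p => if fixOp i j p ∈ A then p else fixOp i j p) ↑A := by
    intro p hp q hq h
    simp only at h
    by_cases h1 : fixOp i j p ∈ A <;> by_cases h2 : fixOp i j q ∈ A <;> simp [h1, h2] at h
    · exact h
    · exact absurd (h ▸ hp) h2
    · exact absurd (h ▸ hq) h1
    · -- fixOp p = fixOp q, both not in A; hence p i = j and q i = j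
      have hpj : p i = j := by
        by_contra hpj
        exact h1 (by simpa [fixOp, hpj] using hp)
      have hqj : q i = j := by
        by_contra hqj
        exact h2 (by simpa [fixOp, hqj] using hq)
      simp only [fixOp, hpj, hqj, if_pos] at h
      exact mul_left_cancel h
  exact ⟨hinj, Finset.card_image_of_injOn hinj⟩
end

section
/- Let A be a maximal family of permutations of [n] such that the fixed-point sets of all members pairwise intersect in at least t points. Then A is an 'upset-generated' family: there is a t-intersecting family g(A) of subsets of [n] such that A consists exactly of all permutations p whose fixed-point set f(p) contains some member of g(A), and |A| = Σ_{S ∈ U(g(A))} D(n - |S|), where U(g(A)) is the upward closure of g(A) in 2^[n] and D is the derangement number. -/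
open Finset Equiv

/-- The fixed-point set of a permutation of `Fin n`. -/
def fixedPts {n : ℕ} (p : Equiv.Perm (Fin n)) : Finset (Fin n) :=
  Finset.univ.filter (fun i => p i = i)

open scoped Classical in
/-- Upward closure of a family of subsets of `Fin n`. -/
noncomputable def upClosure {n : ℕ} (g : Finset (Finset (Fin n))) : Finset (Finset (Fin n)) :=
  Finset.univ.filter (fun S => ∃ T ∈ g, T ⊆ S)

lemma mem_fixedPts {n : ℕ} (p : Equiv.Perm (Fin n)) (i : Fin n) :
    i ∈ fixedPts p ↔ p i = i := by simp [fixedPts]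

open scoped Classical in
lemma count_fixedPts_eq {n : ℕ} (S : Finset (Fin n)) :
    (Finset.univ.filter (fun p : Equiv.Perm (Fin n) => fixedPts p = S)).card
      = numDerangements (n - S.card) := by
  rw [← Fintype.card_subtype]
  have e : derangements {a : Fin n // a ∉ S} ≃ {p : Equiv.Perm (Fin n) // fixedPts p = S} := by
    refine (derangements.subtypeEquiv (fun a : Fin n => a ∉ S)).trans
      (Equiv.subtypeEquivRight fun f => ?_)
    constructor
    · intro h
      ext a
      rw [mem_fixedPts]
      have := h a
      simp only [not_not] at this
      exact ⟨fun hf => this.mpr hf, fun ha => this.mp ha⟩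
    · intro h a
      simp only [not_not, ← h, mem_fixedPts]
      exact Iff.rfl
  rw [← Fintype.card_congr e, card_derangements_eq_numDerangements]
  congr 1
  rw [Fintype.card_subtype_compl, Fintype.card_coe, Fintype.card_fin]

theorem maximal_fixed_t_intersecting_is_upset_generated {n t : ℕ}
    (A : Finset (Equiv.Perm (Fin n)))
    (hA : ∀ p ∈ A, ∀ q ∈ A, t ≤ ((fixedPts p) ∩ (fixedPts q)).card)
    (hmax : ∀ B : Finset (Equiv.Perm (Fin n)),
      (∀ p ∈ B, ∀ q ∈ B, t ≤ ((fixedPts p) ∩ (fixedPts q)).card) → B.card ≤ A.card) :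
    ∃ g : Finset (Finset (Fin n)),
      (∀ S ∈ g, ∀ T ∈ g, t ≤ (S ∩ T).card) ∧
      (∀ p : Equiv.Perm (Fin n), p ∈ A ↔ ∃ S ∈ g, S ⊆ fixedPts p) ∧
      A.card = ∑ S ∈ upClosure g, numDerangements (n - S.card) := by
  classical
  -- closure under enlarging fixed point sets
  have hclose : ∀ q : Equiv.Perm (Fin n), (∃ p ∈ A, fixedPts p ⊆ fixedPts q) → q ∈ A := by
    rintro q ⟨p, hp, hsub⟩
    by_contra hq
    have hB : ∀ a ∈ insert q A, ∀ b ∈ insert q A,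
        t ≤ ((fixedPts a) ∩ (fixedPts b)).card := by
      have key : ∀ a ∈ insert q A, ∃ a' ∈ A, fixedPts a' ⊆ fixedPts a := by
        intro a ha
        rcases Finset.mem_insert.mp ha with rfl | ha
        · exact ⟨p, hp, hsub⟩
        · exact ⟨a, ha, le_rfl⟩
      intro a ha b hb
      obtain ⟨a', ha', hsa⟩ := key a ha
      obtain ⟨b', hb', hsb⟩ := key b hb
      calc t ≤ ((fixedPts a') ∩ (fixedPts b')).card := hA a' ha' b' hb'
        _ ≤ _ := Finset.card_le_card (Finset.inter_subset_inter hsa hsb)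
    have := hmax _ hB
    rw [Finset.card_insert_of_notMem hq] at this
    omega
  refine ⟨A.image fixedPts, ?_, ?_, ?_⟩
  · intro S hS T hT
    obtain ⟨p, hp, rfl⟩ := Finset.mem_image.mp hS
    obtain ⟨q, hq, rfl⟩ := Finset.mem_image.mp hT
    exact hA p hp q hq
  · intro p
    constructor
    · intro hp
      exact ⟨fixedPts p, Finset.mem_image_of_mem _ hp, le_rfl⟩
    · rintro ⟨S, hS, hsub⟩
      obtain ⟨r, hr, rfl⟩ := Finset.mem_image.mp hS
      exact hclose p ⟨r, hr, hsub⟩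
  · have hmemA : ∀ p : Equiv.Perm (Fin n),
        p ∈ A ↔ fixedPts p ∈ upClosure (A.image fixedPts) := by
      intro p
      simp only [upClosure, Finset.mem_filter, Finset.mem_univ, true_and]
      constructor
      · intro hp
        exact ⟨fixedPts p, Finset.mem_image_of_mem _ hp, le_rfl⟩
      · rintro ⟨T, hT, hsub⟩
        obtain ⟨r, hr, rfl⟩ := Finset.mem_image.mp hT
        exact hclose p ⟨r, hr, hsub⟩
    rw [Finset.card_eq_sum_card_fiberwise (f := fixedPts)
      (t := upClosure (A.image fixedPts)) (fun p hp => (hmemA p).mp hp)]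
    refine Finset.sum_congr rfl fun S hS => ?_
    rw [← count_fixedPts_eq S]
    congr 1
    ext p
    simp only [Finset.mem_filter, Finset.mem_univ, true_and, and_iff_right_iff_imp]
    intro hfp
    exact (hmemA p).mpr (hfp ▸ hS)
end

section
/- Define S_i = |U(H_i)| = Σ_{S ∈ U(H_i)} 1 counted as permutation families: S_i = (n-i)! - Σ_{j=0}^{n-t-i} C(n-t-i, j)·D(n-t-j) + t·Σ_{j=0}^{n-t-i} C(n-t-i, j)·D(n-t-i-j+1), interpreted as the number of permutations of [n] whose fixed-point set contains a member of H_i. Then the sequence (S_i) satisfies: if S_i < S_{i+1}, then S_{i+1} < S_{i+2}; consequently max_{2 ≤ i ≤ n-t-1} S_i = max{S_2, S_{n-t-1}}. -/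
open Finset

/-- The Frankl-type family `H_i` as subsets of `[n] = Icc 1 n`. -/
def Hfam (t i : ℕ) : Finset (Finset ℕ) :=
  ((Finset.Icc 1 (t + i)).powersetCard (t + 1)).filter (fun S => Finset.Icc 1 t ⊆ S) ∪
    ((Finset.Icc 1 (t + i)).powersetCard (t + i - 1)).filter
      (fun S => Finset.Icc (t + 1) (t + i) ⊆ S)

open scoped Classical in
/-- `S_i`: the number of permutations of `[n]` whose fixed-point set contains a
member of `H_i`, computed as a sum of derangement numbers over the upward
closure of `H_i` in `2^[n]`. -/
noncomputable def Sfun (n t i : ℕ) : ℕ :=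
  ∑ S ∈ ((Finset.Icc 1 n).powerset.filter (fun S => ∃ T ∈ Hfam t i, T ⊆ S)),
    numDerangements (n - S.card)

/-!
Write `R(N, s) = ∑_{j ≤ s} C(s, j) D(N - j)` (`derangementSum N s`): it counts the permutations of
an `N`-set whose fixed points all lie in a given `s`-subset. Let `L = [t]`, `M = [t+1, t+i]`. A set
`S` lies above a member of `H_i` iff either `L ⊆ S` and `S` meets `M`, or `S` contains
`(L ∪ M) \ {x}` for some `x ∈ L` but not `x`. Counting the two parts gives, with `m = n - t - i`,
`S_i + R(n-t, m) = R(n-t, n-t) + t R(m+1, m)`,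
so `S_{i+1} - S_i = R(n-t-1, m-1) - t (R(m+1, m) - R(m, m-1))`. Since `D(k+1) ≥ 2 D(k)` for
`k ≥ 1`, we have `R(m+1, m) ≥ 3 R(m, m-1)` and `R(N, s+1) ≤ 2 R(N, s)`; together these show that
a positive increment forces the next one to be positive. A sequence with this property attains
its maximum over an interval at an endpoint.
-/

theorem le_max_of_forall_lt_succ_imp_lt_succ {α : Type*} [LinearOrder α] {f : ℕ → α} {a b : ℕ}
    (hf : ∀ i, a ≤ i → i + 2 ≤ b → f i < f (i + 1) → f (i + 1) < f (i + 2))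
    {i : ℕ} (hai : a ≤ i) (hib : i ≤ b) : f i ≤ max (f a) (f b) := by
  by_cases hinc : ∃ j, a ≤ j ∧ j < i ∧ f j < f (j + 1)
  · obtain ⟨j, haj, hji, hj⟩ := hinc
    have hlt : ∀ k, j ≤ k → k + 1 ≤ b → f k < f (k + 1) := by
      intro k hjk
      induction k, hjk using Nat.le_induction with
      | base => exact fun _ => hj
      | succ k hjk ih => exact fun hkb => hf k (haj.trans hjk) hkb (ih (by omega))
    have hmono : ∀ k, i ≤ k → k ≤ b → f i ≤ f k := by
      intro k hik
      induction k, hik using Nat.le_induction with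
      | base => exact fun _ => le_rfl
      | succ k hik ih => exact fun hkb => (ih (by omega)).trans (hlt k (by omega) hkb).le
    exact (hmono b hib le_rfl).trans (le_max_right _ _)
  · push Not at hinc
    have hanti : ∀ k, a ≤ k → k ≤ i → f k ≤ f a := by
      intro k hak
      induction k, hak using Nat.le_induction with
      | base => exact fun _ => le_rfl
      | succ k hak ih => exact fun hki => (hinc k hak hki).trans (ih (by omega))
    exact (hanti i hai le_rfl).trans (le_max_left _ _)

def derangementSum (N s : ℕ) : ℕ :=
  ∑ j ∈ range (s + 1), s.choose j * numDerangements (N - j)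

theorem sum_powerset_numDerangements {α : Type*} (X : Finset α) (N : ℕ) :
    ∑ W ∈ X.powerset, numDerangements (N - #W) = derangementSum N #X := by
  rw [sum_powerset_apply_card (fun k => numDerangements (N - k))]
  rfl

theorem derangementSum_succ_right (N s : ℕ) :
    derangementSum N (s + 1) = derangementSum N s + derangementSum (N - 1) s := by
  calc derangementSum N (s + 1)
      = ∑ W ∈ (insert s (range s)).powerset, numDerangements (N - #W) := by
        rw [← range_add_one, sum_powerset_numDerangements, card_range]
    _ = ∑ W ∈ (range s).powerset, numDerangements (N - #W) +
          ∑ W ∈ (range s).powerset, numDerangements (N - #(insert s W)) :=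
        sum_powerset_insert notMem_range_self _
    _ = derangementSum N s + derangementSum (N - 1) s := by
        have hinsert : ∀ W ∈ (range s).powerset,
            numDerangements (N - #(insert s W)) = numDerangements (N - 1 - #W) := fun W hW => by
          rw [card_insert_of_notMem fun h => notMem_range_self (mem_powerset.1 hW h), Nat.sub_sub,
            add_comm]
        rw [sum_congr rfl hinsert, sum_powerset_numDerangements, sum_powerset_numDerangements,
          card_range]

theorem two_mul_numDerangements_le (k : ℕ) :
    2 * numDerangements (k + 1) ≤ numDerangements (k + 2) := by
  rw [numDerangements_add_two]
  rcases k with _ | k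
  · simp
  · nlinarith

theorem two_mul_derangementSum_le {N s : ℕ} (h : s < N) :
    2 * derangementSum N s ≤ derangementSum (N + 1) s := by
  rw [derangementSum, derangementSum, mul_sum]
  refine sum_le_sum fun j hj => ?_
  obtain ⟨k, hk⟩ : ∃ k, N - j = k + 1 := ⟨N - j - 1, by rw [mem_range] at hj; omega⟩
  rw [show N + 1 - j = k + 2 by omega, hk, mul_left_comm]
  exact Nat.mul_le_mul_left _ (two_mul_numDerangements_le k)

theorem three_mul_derangementSum_le (s : ℕ) :
    3 * derangementSum (s + 1) s ≤ derangementSum (s + 2) (s + 1) := by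
  have h : 2 * derangementSum (s + 1) s ≤ derangementSum (s + 2) s :=
    two_mul_derangementSum_le (Nat.lt_add_one s)
  rw [derangementSum_succ_right, show s + 2 - 1 = s + 1 by omega]
  omega

theorem derangementSum_succ_le {N s : ℕ} (h : s + 2 ≤ N) :
    derangementSum N (s + 1) ≤ 2 * derangementSum N s := by
  obtain ⟨M, rfl⟩ : ∃ M, N = M + 1 := ⟨N - 1, by omega⟩
  have := two_mul_derangementSum_le (show s < M by omega)
  rw [derangementSum_succ_right, Nat.add_sub_cancel]
  omega

section

variable {α : Type*} [DecidableEq α]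

theorem powerset_filter_eq_filter_Icc_union_biUnion {L M N : Finset α} (hM : M.Nonempty) :
    {S ∈ N.powerset | (L ⊆ S ∧ ¬Disjoint M S) ∨ ∃ x ∈ L, (L ∪ M).erase x ⊆ S} =
      {S ∈ Icc L N | ¬Disjoint M S} ∪ L.biUnion fun x => Icc ((L ∪ M).erase x) (N.erase x) := by
  ext S
  simp only [mem_filter, mem_powerset, mem_union, mem_Icc, mem_biUnion, subset_erase]
  constructor
  · rintro ⟨hSN, ⟨hLS, hMS⟩ | ⟨x, hxL, hxS⟩⟩
    · exact .inl ⟨⟨hLS, hSN⟩, hMS⟩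
    · by_cases hx : x ∈ S
      · have hLMS : L ∪ M ⊆ S := by
          rw [← insert_erase (mem_union_left M hxL)]
          exact insert_subset hx hxS
        obtain ⟨m, hm⟩ := hM
        exact .inl ⟨⟨subset_union_left.trans hLMS, hSN⟩,
          not_disjoint_iff.2 ⟨m, hm, hLMS (mem_union_right L hm)⟩⟩
      · exact .inr ⟨x, hxL, hxS, hSN, hx⟩
  · rintro (⟨⟨hLS, hSN⟩, hMS⟩ | ⟨x, hxL, hxS, hSN, -⟩)
    · exact ⟨hSN, .inl ⟨hLS, hMS⟩⟩
    · exact ⟨hSN, .inr ⟨x, hxL, hxS⟩⟩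

theorem sum_powerset_filter_add_sum_Icc_sdiff {β : Type*} [AddCommMonoid β] (f : Finset α → β)
    {L M N : Finset α} (hM : M.Nonempty) :
    ∑ S ∈ N.powerset with (L ⊆ S ∧ ¬Disjoint M S) ∨ ∃ x ∈ L, (L ∪ M).erase x ⊆ S, f S +
        ∑ S ∈ Icc L (N \ M), f S =
      ∑ S ∈ Icc L N, f S + ∑ x ∈ L, ∑ S ∈ Icc ((L ∪ M).erase x) (N.erase x), f S := by
  have hcompl : Icc L (N \ M) = {S ∈ Icc L N | Disjoint M S} := by
    ext S
    simp only [mem_Icc, mem_filter, subset_sdiff, disjoint_comm, and_assoc]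
  have hdisj : Disjoint {S ∈ Icc L N | ¬Disjoint M S}
      (L.biUnion fun x => Icc ((L ∪ M).erase x) (N.erase x)) := by
    simp only [disjoint_left, mem_filter, mem_Icc, mem_biUnion, subset_erase, not_exists,
      not_and]
    exact fun S ⟨⟨hLS, _⟩, _⟩ x hxL _ _ hx => hx (hLS hxL)
  have hpair : (L : Set α).PairwiseDisjoint fun x => Icc ((L ∪ M).erase x) (N.erase x) := by
    intro x hx y hy hxy
    simp only [Function.onFun, disjoint_left, mem_Icc, subset_erase]
    exact fun S ⟨hxS, _⟩ ⟨_, _, hyS⟩ =>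
      hyS (hxS (mem_erase.2 ⟨Ne.symm hxy, mem_union_left M hy⟩))
  rw [powerset_filter_eq_filter_Icc_union_biUnion hM, sum_union hdisj, sum_biUnion hpair, hcompl,
    add_right_comm, sum_filter_not_add_sum_filter]

theorem sum_Icc_numDerangements {A B : Finset α} (h : A ⊆ B) (n : ℕ) :
    ∑ S ∈ Icc A B, numDerangements (n - #S) = derangementSum (n - #A) (#B - #A) := by
  rw [Icc_eq_image_powerset h, sum_image, ← card_sdiff_of_subset h, ← sum_powerset_numDerangements]
  · refine sum_congr rfl fun W hW => ?_
    rw [card_union_of_disjoint (disjoint_sdiff.mono_right (mem_powerset.1 hW)), Nat.sub_add_eq]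
  · intro u hu v hv huv
    rw [← union_sdiff_cancel_left (disjoint_sdiff.mono_right (mem_powerset.1 hu)),
      ← union_sdiff_cancel_left (disjoint_sdiff.mono_right (mem_powerset.1 hv))]
    exact congrArg (· \ A) huv

end

theorem Hfam_eq {t i : ℕ} (hi : 1 ≤ i) :
    Hfam t i = (Icc (t + 1) (t + i)).image (insert · (Icc 1 t)) ∪
      (Icc 1 t).image (Icc 1 (t + i)).erase := by
  have hL : #(Icc 1 t) = t := by simp
  have hU : #(Icc 1 (t + i)) = t + i := by simp
  ext T
  simp only [Hfam, mem_union, mem_filter, mem_powersetCard, mem_image]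
  refine or_congr ?_ ?_
  · constructor
    · rintro ⟨⟨hTU, hT⟩, hLT⟩
      obtain ⟨x, hx, rfl⟩ := exists_eq_insert_iff.2 ⟨hLT, by rw [hL, hT]⟩
      refine ⟨x, ?_, rfl⟩
      have := hTU (mem_insert_self x _)
      simp only [mem_Icc] at hx this ⊢
      omega
    · rintro ⟨x, hx, rfl⟩
      have hxL : x ∉ Icc 1 t := by simp only [mem_Icc] at hx ⊢; omega
      refine ⟨⟨insert_subset (Icc_subset_Icc (by omega) le_rfl hx)
        (Icc_subset_Icc le_rfl (by omega)), by rw [card_insert_of_notMem hxL, hL]⟩,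
        subset_insert _ _⟩
  · constructor
    · rintro ⟨⟨hTU, hT⟩, hMT⟩
      obtain ⟨x, hxT, hxTU⟩ := exists_eq_insert_iff.2 ⟨hTU, by rw [hT, hU]; omega⟩
      refine ⟨x, ?_, by rw [← hxTU, erase_insert hxT]⟩
      have hxU : x ∈ Icc 1 (t + i) := hxTU ▸ mem_insert_self x T
      have hxM : x ∉ Icc (t + 1) (t + i) := fun h => hxT (hMT h)
      simp only [mem_Icc] at hxU hxM ⊢
      omega
    · rintro ⟨x, hx, rfl⟩
      have hxM : x ∉ Icc (t + 1) (t + i) := by simp only [mem_Icc] at hx ⊢; omega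
      refine ⟨⟨erase_subset _ _, ?_⟩, ?_⟩
      · rw [card_erase_of_mem (Icc_subset_Icc le_rfl (by omega) hx), hU]
      · exact subset_erase.2 ⟨Icc_subset_Icc (by omega) le_rfl, hxM⟩

theorem Sfun_add_derangementSum {n t i k m : ℕ} (hi : 1 ≤ i) (hn : t + k = n) (hk : i + m = k) :
    Sfun n t i + derangementSum k m = derangementSum k k + t * derangementSum (m + 1) m := by
  set L := Icc 1 t
  set M := Icc (t + 1) (t + i)
  set N := Icc 1 n
  have hU : Icc 1 (t + i) = L ∪ M := by ext; simp only [L, M, mem_union, mem_Icc]; omega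
  have hSfun : Sfun n t i = ∑ S ∈ N.powerset with
      (L ⊆ S ∧ ¬Disjoint M S) ∨ ∃ x ∈ L, (L ∪ M).erase x ⊆ S, numDerangements (n - #S) := by
    unfold Sfun
    refine sum_congr (filter_congr fun S _ => ?_) fun _ _ => rfl
    simp only [Hfam_eq hi, hU, mem_union, or_and_right, exists_or, exists_mem_image,
      insert_subset_iff, not_disjoint_iff]
    exact or_congr_left ⟨fun ⟨x, hxM, hxS, hLS⟩ => ⟨hLS, x, hxM, hxS⟩,
      fun ⟨hLS, x, hxM, hxS⟩ => ⟨x, hxM, hxS, hLS⟩⟩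
  have hLM : Disjoint L M := disjoint_left.2 fun x hxL hxM => by
    simp only [L, M, mem_Icc] at hxL hxM
    omega
  have hLN : L ⊆ N := Icc_subset_Icc le_rfl (by omega)
  have hMN : M ⊆ N := Icc_subset_Icc (by omega) (by omega)
  have hL : #L = t := by simp [L]
  have hM : #M = i := by simp [M]
  have hN : #N = n := by simp [N]
  have hx : ∀ x ∈ L, ∑ S ∈ Icc ((L ∪ M).erase x) (N.erase x), numDerangements (n - #S) =
      derangementSum (m + 1) m := by
    intro x hxL
    rw [sum_Icc_numDerangements (erase_subset_erase x (union_subset hLN hMN)),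
      card_erase_of_mem (mem_union_left M hxL), card_erase_of_mem (hLN hxL), ← hU, hN,
      Nat.card_Icc]
    congr 1 <;> omega
  have key := sum_powerset_filter_add_sum_Icc_sdiff (fun S => numDerangements (n - #S))
    (L := L) (N := N) (nonempty_Icc.2 (by omega) : M.Nonempty)
  rw [← hSfun, sum_congr rfl hx, sum_const, hL, smul_eq_mul,
    sum_Icc_numDerangements (subset_sdiff.2 ⟨hLN, hLM⟩), sum_Icc_numDerangements hLN,
    card_sdiff_of_subset hMN, hL, hM, hN, show n - t = k by omega,
    show n - i - t = m by omega] at key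
  exact key

theorem Sfun_succ_lt_of_lt {n t i : ℕ} (hi : 1 ≤ i) (hn : t + i + 2 ≤ n)
    (h : Sfun n t i < Sfun n t (i + 1)) : Sfun n t (i + 1) < Sfun n t (i + 2) := by
  obtain ⟨m, k, hm, hk⟩ : ∃ m k, i + m + 2 = k ∧ t + k = n :=
    ⟨n - t - i - 2, n - t, by omega, by omega⟩
  have hS0 : Sfun n t i + derangementSum k (m + 2) =
      derangementSum k k + t * derangementSum (m + 3) (m + 2) :=
    Sfun_add_derangementSum hi hk (by omega)
  have hS1 : Sfun n t (i + 1) + derangementSum k (m + 1) =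
      derangementSum k k + t * derangementSum (m + 2) (m + 1) :=
    Sfun_add_derangementSum (by omega) hk (by omega)
  have hS2 : Sfun n t (i + 2) + derangementSum k m =
      derangementSum k k + t * derangementSum (m + 1) m :=
    Sfun_add_derangementSum (by omega) hk (by omega)
  have hpascal1 : derangementSum k (m + 2) =
      derangementSum k (m + 1) + derangementSum (k - 1) (m + 1) :=
    derangementSum_succ_right k (m + 1)
  have hpascal0 := derangementSum_succ_right k m
  have hthree : 3 * (t * derangementSum (m + 2) (m + 1)) ≤ t * derangementSum (m + 3) (m + 2) := by
    rw [mul_left_comm]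
    exact Nat.mul_le_mul_left t (three_mul_derangementSum_le (m + 1))
  have htwo := derangementSum_succ_le (N := k - 1) (s := m) (by omega)
  omega

theorem Sfun_convexity_and_max_general (n t : ℕ) :
    (∀ i : ℕ, 2 ≤ i → i + 2 ≤ n - t - 1 →
      Sfun n t i < Sfun n t (i + 1) → Sfun n t (i + 1) < Sfun n t (i + 2)) ∧
    (∀ i : ℕ, 2 ≤ i → i ≤ n - t - 1 →
      Sfun n t i ≤ max (Sfun n t 2) (Sfun n t (n - t - 1))) := by
  have step : ∀ i, 2 ≤ i → i + 2 ≤ n - t - 1 →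
      Sfun n t i < Sfun n t (i + 1) → Sfun n t (i + 1) < Sfun n t (i + 2) :=
    fun i hi hin => Sfun_succ_lt_of_lt (by omega) (by omega)
  exact ⟨step, fun i hi hin => le_max_of_forall_lt_succ_imp_lt_succ step hi hin⟩

theorem Sfun_convexity_and_max (n t : ℕ) (ht : 1 ≤ t) (hn : t + 3 ≤ n) :
    (∀ i : ℕ, 2 ≤ i → i + 2 ≤ n - t - 1 →
      Sfun n t i < Sfun n t (i + 1) → Sfun n t (i + 1) < Sfun n t (i + 2)) ∧
    (∀ i : ℕ, 2 ≤ i → i ≤ n - t - 1 →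
      Sfun n t i ≤ max (Sfun n t 2) (Sfun n t (n - t - 1))) :=
  Sfun_convexity_and_max_general n t
end

section
/- The implication between consecutive inequalities: for integers n, t, i with t ≥ 1 and n - t - i ≥ 2, if Σ_{j=0}^{n-t-i-1} C(n-t-i-1, j)·D(n-t-j+1) ≥ t·Σ_{j=0}^{n-t-i-1} C(n-t-i-1, j)·D(n-t-j-i+1), then Σ_{j=0}^{n-t-i-2} C(n-t-i-2, j)·D(n-t-j+1) ≥ t·Σ_{j=0}^{n-t-i-2} C(n-t-i-2, j)·D(n-t-j-i). -/
open Finset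

lemma numDerangements_mono_aux (k : ℕ) :
    numDerangements (k + 1) ≤ numDerangements (k + 2) := by
  rw [numDerangements_add_two]
  nlinarith [Nat.zero_le (numDerangements k), Nat.zero_le (numDerangements (k+1))]

lemma sum_pascal_split (f : ℕ → ℕ) (k : ℕ) :
    ∑ j ∈ Finset.range (k + 2), Nat.choose (k + 1) j * f j
      = ∑ j ∈ Finset.range (k + 1), Nat.choose k j * f j
        + ∑ j ∈ Finset.range (k + 1), Nat.choose k j * f (j + 1) := by
  rw [Finset.sum_range_succ' _ (k + 1)]
  have h1 : ∀ j ∈ Finset.range (k + 1),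
      Nat.choose (k + 1) (j + 1) * f (j + 1)
        = Nat.choose k j * f (j + 1) + Nat.choose k (j + 1) * f (j + 1) := by
    intro j _
    rw [Nat.choose_succ_succ, add_mul]
  rw [Finset.sum_congr rfl h1, Finset.sum_add_distrib]
  have h2 : ∑ j ∈ Finset.range (k + 1), Nat.choose k j * f j
      = ∑ j ∈ Finset.range k, Nat.choose k (j + 1) * f (j + 1)
        + Nat.choose k 0 * f 0 := by
    exact Finset.sum_range_succ' (fun j => Nat.choose k j * f j) k
  have h3 : ∑ j ∈ Finset.range (k + 1), Nat.choose k (j + 1) * f (j + 1)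
      = ∑ j ∈ Finset.range k, Nat.choose k (j + 1) * f (j + 1) := by
    rw [Finset.sum_range_succ, Nat.choose_succ_self, zero_mul, add_zero]
  rw [h2, h3]
  simp only [Nat.choose_zero_right, one_mul]
  omega

theorem consecutive_inequality_implication (n t i : ℕ) (ht : 1 ≤ t)
    (h : 2 ≤ n - t - i)
    (h1 : t * ∑ j ∈ Finset.range (n - t - i),
        Nat.choose (n - t - i - 1) j * numDerangements (n - t - j - i + 1) ≤
      ∑ j ∈ Finset.range (n - t - i),
        Nat.choose (n - t - i - 1) j * numDerangements (n - t - j + 1)) :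
    t * ∑ j ∈ Finset.range (n - t - i - 1),
        Nat.choose (n - t - i - 2) j * numDerangements (n - t - j - i) ≤
      ∑ j ∈ Finset.range (n - t - i - 1),
        Nat.choose (n - t - i - 2) j * numDerangements (n - t - j + 1) := by
  obtain ⟨k, hk⟩ : ∃ k, n - t - i = k + 2 := ⟨n - t - i - 2, by omega⟩
  have hN : n - t = i + k + 2 := by omega
  rw [hk] at h1 ⊢
  simp only [show k + 2 - 1 = k + 1 from rfl, show k + 2 - 2 = k from rfl] at h1 ⊢
  rw [sum_pascal_split, sum_pascal_split] at h1
  set A1 := ∑ j ∈ Finset.range (k + 1),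
      Nat.choose k j * numDerangements (n - t - j + 1) with hA1
  set A2 := ∑ j ∈ Finset.range (k + 1),
      Nat.choose k j * numDerangements (n - t - (j + 1) + 1) with hA2
  set B1 := ∑ j ∈ Finset.range (k + 1),
      Nat.choose k j * numDerangements (n - t - j - i + 1) with hB1
  set B2 := ∑ j ∈ Finset.range (k + 1),
      Nat.choose k j * numDerangements (n - t - (j + 1) - i + 1) with hB2
  -- goal sum equals B2
  have hgoal : ∑ j ∈ Finset.range (k + 1),
      Nat.choose k j * numDerangements (n - t - j - i) = B2 := by
    apply Finset.sum_congr rfl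
    intro j hj
    have hj' : j ≤ k := by simpa using Nat.lt_succ_iff.mp (Finset.mem_range.mp hj)
    congr 2
    omega
  rw [hgoal]
  -- A2 ≤ A1
  have hA : A2 ≤ A1 := by
    apply Finset.sum_le_sum
    intro j hj
    have hj' : j ≤ k := Nat.lt_succ_iff.mp (Finset.mem_range.mp hj)
    apply Nat.mul_le_mul_left
    have e1 : n - t - (j + 1) + 1 = (n - t - j - 1) + 1 := by omega
    have e2 : n - t - j + 1 = (n - t - j - 1) + 2 := by omega
    rw [e1, e2]
    exact numDerangements_mono_aux _
  -- B2 ≤ B1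
  have hB : B2 ≤ B1 := by
    apply Finset.sum_le_sum
    intro j hj
    have hj' : j ≤ k := Nat.lt_succ_iff.mp (Finset.mem_range.mp hj)
    apply Nat.mul_le_mul_left
    have e1 : n - t - (j + 1) - i + 1 = (n - t - j - i - 1) + 1 := by omega
    have e2 : n - t - j - i + 1 = (n - t - j - i - 1) + 2 := by omega
    rw [e1, e2]
    exact numDerangements_mono_aux _
  have key : 2 * (t * B2) ≤ 2 * A1 := by
    have h2 : t * B2 + t * B2 ≤ t * B1 + t * B2 :=
      Nat.add_le_add_right (Nat.mul_le_mul_left t hB) _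
    have h3 : t * B1 + t * B2 ≤ A1 + A2 := by
      rw [← Nat.mul_add]; exact h1
    have h4 : A1 + A2 ≤ A1 + A1 := Nat.add_le_add_left hA _
    calc 2 * (t * B2) = t * B2 + t * B2 := by ring
      _ ≤ A1 + A1 := le_trans h2 (le_trans h3 h4)
      _ = 2 * A1 := by ring
  exact Nat.le_of_mul_le_mul_left key (by norm_num)
end

section
/- If f₁ and f₂ are two sets in a left-compressed t-intersecting family of subsets of [n], and there exist i ∉ f₁ ∪ f₂ and j ∈ f₁ ∩ f₂ with i < j, then |f₁ ∩ f₂| ≥ t + 1. -/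
open Finset

theorem left_compressed_intersection_bound (n t : ℕ) (G : Finset (Finset ℕ))
    (hsub : ∀ f ∈ G, f ⊆ Finset.Icc 1 n)
    (hint : ∀ f ∈ G, ∀ g ∈ G, t ≤ (f ∩ g).card)
    (hcomp : ∀ v w : ℕ, 1 ≤ v → v < w → w ≤ n →
      ∀ f ∈ G, w ∈ f → v ∉ f → insert v (f.erase w) ∈ G)
    (f₁ f₂ : Finset ℕ) (hf₁ : f₁ ∈ G) (hf₂ : f₂ ∈ G)
    (i j : ℕ) (hi1 : 1 ≤ i) (hjn : j ≤ n)
    (hi : i ∉ f₁ ∪ f₂) (hj : j ∈ f₁ ∩ f₂) (hij : i < j) :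
    t + 1 ≤ (f₁ ∩ f₂).card := by
  simp only [mem_union, not_or] at hi
  simp only [mem_inter] at hj
  have hf' : insert i (f₁.erase j) ∈ G := hcomp i j hi1 hij hjn f₁ hf₁ hj.1 hi.1
  have hsubset : insert i (f₁.erase j) ∩ f₂ ⊆ (f₁ ∩ f₂).erase j := by
    intro x hx
    simp only [mem_inter, mem_insert, mem_erase] at hx ⊢
    rcases hx.1 with h | h
    · exact absurd (h ▸ hx.2) hi.2
    · exact ⟨h.1, h.2, hx.2⟩
  have h1 : t ≤ ((f₁ ∩ f₂).erase j).card :=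
    le_trans (hint _ hf' _ hf₂) (card_le_card hsubset)
  have h2 : ((f₁ ∩ f₂).erase j).card = (f₁ ∩ f₂).card - 1 :=
    card_erase_of_mem (mem_inter.mpr hj)
  have h3 : 1 ≤ (f₁ ∩ f₂).card := card_pos.mpr ⟨j, mem_inter.mpr hj⟩
  omega
end

section
/- For fixed t ≥ 1 and sufficiently large n, S_2 > S_{n-t-1}, i.e., (n-t)! - D(n-t) - D(n-t-1) + t > (n-t)! - Σ_{j=0}^{n-t-2} C(n-t-2,j)·D(n-t-j) + t·Σ_{j=0}^{n-t-2} C(n-t-2,j)·D(n-t-j-1). -/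
open Finset

-- D k ≤ k!
lemma D_ub : ∀ k : ℕ, numDerangements k ≤ k.factorial := by
  intro k
  induction k using Nat.strong_induction_on with
  | _ k ih =>
    match k with
    | 0 => simp
    | 1 => simp
    | (k+2) =>
      have h1 := ih k (by omega)
      have h2 := ih (k+1) (by omega)
      rw [numDerangements_add_two]
      have e1 : (k+2).factorial = (k+2) * ((k+1) * k.factorial) := by
        rw [Nat.factorial_succ, Nat.factorial_succ]
      have e2 : (k+1).factorial = (k+1) * k.factorial := Nat.factorial_succ k
      nlinarith [Nat.factorial_pos k]

-- k! ≤ 3 * D k for k ≥ 2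
lemma D_lb : ∀ k : ℕ, (k+2).factorial ≤ 3 * numDerangements (k+2) := by
  intro k
  induction k using Nat.strong_induction_on with
  | _ k ih =>
    match k with
    | 0 => simp [numDerangements_add_two]
    | 1 => simp [numDerangements_add_two]; decide
    | (k+2) =>
      have h1 := ih k (by omega)
      have h2 := ih (k+1) (by omega)
      rw [numDerangements_add_two]
      have e1 : (k+4).factorial = (k+4) * ((k+3) * (k+2).factorial) := by
        rw [Nat.factorial_succ, Nat.factorial_succ]
      have e2 : (k+3).factorial = (k+3) * (k+2).factorial := Nat.factorial_succ (k+2)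
      nlinarith [Nat.factorial_pos (k+2)]

-- sum of N!/j!
lemma sumfac_step (N : ℕ) : ∑ j ∈ range (N+2), (N+1).choose j * (N+1-j).factorial
    = (N+1) * (∑ j ∈ range (N+1), N.choose j * (N-j).factorial) + 1 := by
  rw [Finset.sum_range_succ, Finset.mul_sum]
  have key : ∀ j ∈ range (N+1), (N+1).choose j * (N+1-j).factorial
      = (N+1) * (N.choose j * (N-j).factorial) := by
    intro j hj
    simp only [mem_range] at hj
    have hj' : j ≤ N := by omega
    have L : (N+1).choose j * (N+1-j).factorial * j.factorial = (N+1).factorial := by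
      have := Nat.choose_mul_factorial_mul_factorial (Nat.le_succ_of_le hj' : j ≤ N+1)
      linarith [this, mul_right_comm ((N+1).choose j) (j.factorial) ((N+1-j).factorial)]
    have R : N.choose j * (N-j).factorial * j.factorial = N.factorial := by
      have := Nat.choose_mul_factorial_mul_factorial hj'
      linarith [this, mul_right_comm (N.choose j) (j.factorial) ((N-j).factorial)]
    have E : (N+1).choose j * (N+1-j).factorial * j.factorial
        = (N+1) * (N.choose j * (N-j).factorial) * j.factorial := by
      rw [L, mul_assoc, R, Nat.factorial_succ]
    exact Nat.eq_of_mul_eq_mul_right (Nat.factorial_pos j) E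
  rw [Finset.sum_congr rfl key]
  simp [Nat.choose_self]

lemma sumfac : ∀ N : ℕ, (∑ j ∈ range (N+1), N.choose j * (N-j).factorial) + 1 ≤ 3 * N.factorial := by
  intro N
  induction N using Nat.strong_induction_on with
  | _ N ih =>
    match N with
    | 0 => simp
    | 1 => simp [Finset.sum_range_succ]
    | (N+2) =>
      have ih1 := ih (N+1) (by omega)
      rw [sumfac_step (N+1)]
      have e : (N+2).factorial = (N+2) * (N+1).factorial := Nat.factorial_succ (N+1)
      nlinarith [Nat.factorial_pos (N+1)]

lemma sum2_ub (N : ℕ) :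
    (∑ j ∈ range (N+1), N.choose j * numDerangements (N+1-j)) + 1 ≤ 3 * (N+1).factorial := by
  have hterm : ∀ j ∈ range (N+1), N.choose j * numDerangements (N+1-j)
      ≤ (N+1) * (N.choose j * (N-j).factorial) := by
    intro j hj
    simp only [mem_range] at hj
    have h1 : numDerangements (N+1-j) ≤ (N+1-j).factorial := D_ub _
    have h2 : (N+1-j).factorial = (N+1-j) * (N-j).factorial := by
      rw [show N+1-j = (N-j)+1 by omega, Nat.factorial_succ]
    calc N.choose j * numDerangements (N+1-j) ≤ N.choose j * ((N+1-j) * (N-j).factorial) := by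
          rw [← h2]; exact Nat.mul_le_mul_left _ h1
      _ ≤ N.choose j * ((N+1) * (N-j).factorial) :=
          Nat.mul_le_mul_left _ (Nat.mul_le_mul_right _ (by omega))
      _ = (N+1) * (N.choose j * (N-j).factorial) := by ring
  have hsum := Finset.sum_le_sum hterm
  rw [← Finset.mul_sum] at hsum
  have hs := sumfac N
  have e : (N+1).factorial = (N+1) * N.factorial := Nat.factorial_succ N
  nlinarith [Nat.factorial_pos N]

lemma sum1_lb (p : ℕ) :
    numDerangements (p+4) + (p+2) * numDerangements (p+3)
      ≤ ∑ j ∈ range (p+3), (p+2).choose j * numDerangements (p+4-j) := by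
  rw [show p+3 = (p+1)+1+1 by ring]
  rw [Finset.sum_range_succ', Finset.sum_range_succ']
  have e0 : (p+2).choose 0 * numDerangements (p+4-0) = numDerangements (p+4) := by simp
  have e1 : (p+2).choose (0+1) * numDerangements (p+4-(0+1)) = (p+2) * numDerangements (p+3) := by
    simp [Nat.choose_one_right]
  rw [e0, e1]
  have e3 : p+1+1+1 = p+3 := by ring
  rw [e3]
  omega

lemma key_ineq (t p : ℕ) (ht : 1 ≤ t) (hp : 9*t ≤ p) :
    t * (∑ j ∈ range (p+3), (p+2).choose j * numDerangements (p+4-j-1))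
      + numDerangements (p+4) + numDerangements (p+3)
    < (∑ j ∈ range (p+3), (p+2).choose j * numDerangements (p+4-j)) + t := by
  have hS2eq : (∑ j ∈ range (p+3), (p+2).choose j * numDerangements (p+4-j-1))
      = ∑ j ∈ range (p+3), (p+2).choose j * numDerangements (p+3-j) := by
    refine Finset.sum_congr rfl fun j hj => ?_
    congr 1
    congr 1
    omega
  rw [hS2eq]
  have A : (∑ j ∈ range (p+3), (p+2).choose j * numDerangements (p+3-j)) + 1
      ≤ 3 * (p+3).factorial := sum2_ub (p+2)
  have B := sum1_lb p
  have C : (p+3).factorial ≤ 3 * numDerangements (p+3) := D_lb (p+1)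
  set S2 := ∑ j ∈ range (p+3), (p+2).choose j * numDerangements (p+3-j)
  set S1 := ∑ j ∈ range (p+3), (p+2).choose j * numDerangements (p+4-j)
  have h1 : t * (S2 + 1) ≤ t * (3 * (p+3).factorial) := Nat.mul_le_mul_left t A
  have h2 : t * (3 * (p+3).factorial) ≤ t * (9 * numDerangements (p+3)) :=
    Nat.mul_le_mul_left t (by omega)
  have h3 : (9*t+2) * numDerangements (p+3) ≤ (p+2) * numDerangements (p+3) :=
    Nat.mul_le_mul_right _ (by omega)
  nlinarith [Nat.factorial_pos (p+3)]

theorem S2_beats_Sntm1_for_large_n (t : ℕ) (ht : 1 ≤ t) :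
    ∃ n₀ : ℕ, ∀ n : ℕ, n₀ ≤ n →
      ((Nat.factorial (n - t) : ℤ)
          - ∑ j ∈ Finset.range (n - t - 1),
              (Nat.choose (n - t - 2) j : ℤ) * numDerangements (n - t - j)
          + t * ∑ j ∈ Finset.range (n - t - 1),
              (Nat.choose (n - t - 2) j : ℤ) * numDerangements (n - t - j - 1)) <
        ((Nat.factorial (n - t) : ℤ) - numDerangements (n - t)
          - numDerangements (n - t - 1) + t) := by
  refine ⟨10*t + 4, fun n hn => ?_⟩
  obtain ⟨p, hpm, hp⟩ : ∃ p, n - t = p + 4 ∧ 9*t ≤ p := ⟨n - t - 4, by omega, by omega⟩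
  rw [hpm]
  have e1 : p + 4 - 1 = p + 3 := by omega
  have e2 : p + 4 - 2 = p + 2 := by omega
  rw [e1, e2]
  have key := key_ineq t p ht hp
  have keyZ : (↑(t * (∑ j ∈ range (p+3), (p+2).choose j * numDerangements (p+4-j-1))
      + numDerangements (p+4) + numDerangements (p+3)) : ℤ)
    < (↑((∑ j ∈ range (p+3), (p+2).choose j * numDerangements (p+4-j)) + t) : ℤ) := by
    exact_mod_cast key
  push_cast at keyZ
  linarith
end
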